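/- Let Λ be a row-finite k-graph with no sources, let c be a T-valued 2-cocycle on Λ, and let t be a Cuntz–Krieger (Λ,c)-family in a C*-algebra (i.e. a Toeplitz–Cuntz–Krieger (Λ,c)-family with Σ_{λ ∈ vΛ^n} t_λ t_λ* = t_v for all v ∈ Λ^0 and n ∈ ℕ^k). If μ, ν ∈ Λ satisfy s(μ) = s(ν) and μ ∼ ν, then t_μ t_μ* = t_ν t_ν*. -/

import Mathlib

open scoped BigOperators

/-- A `k`-graph: a countable category with degree functor `d : Λ → ℕ^k`
satisfying the factorisation property.  Composition `comp μ ν` is only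
meaningful when `s μ = r ν`. -/
structure KGraph (k : ℕ) where
  Path : Type
  countable : Countable Path
  r : Path → Path
  s : Path → Path
  d : Path → (Fin k → ℕ)
  comp : Path → Path → Path
  d_r : ∀ l, d (r l) = 0
  d_s : ∀ l, d (s l) = 0
  r_of_vertex : ∀ v, d v = 0 → r v = v
  s_of_vertex : ∀ v, d v = 0 → s v = v
  id_comp : ∀ l, comp (r l) l = l
  comp_id : ∀ l, comp l (s l) = l
  r_comp : ∀ μ ν, s μ = r ν → r (comp μ ν) = r μ
  s_comp : ∀ μ ν, s μ = r ν → s (comp μ ν) = s ν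
  d_comp : ∀ μ ν, s μ = r ν → d (comp μ ν) = d μ + d ν
  comp_assoc : ∀ l μ ν, s l = r μ → s μ = r ν →
    comp (comp l μ) ν = comp l (comp μ ν)
  factor : ∀ (l : Path) (m n : Fin k → ℕ), d l = m + n →
    ∃! p : Path × Path, d p.1 = m ∧ d p.2 = n ∧ s p.1 = r p.2 ∧ comp p.1 p.2 = l

namespace KGraph

variable {k : ℕ} (G : KGraph k)

def IsVertex (v : G.Path) : Prop := G.d v = 0

/-- `MCE μ ν = μΛ ∩ νΛ ∩ Λ^{d μ ⊔ d ν}`. -/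
def MCE (μ ν : G.Path) : Set G.Path :=
  {l | G.d l = G.d μ ⊔ G.d ν ∧
      (∃ α, G.s μ = G.r α ∧ G.comp μ α = l) ∧
      (∃ β, G.s ν = G.r β ∧ G.comp ν β = l)}

def FinitelyAligned : Prop := ∀ μ ν : G.Path, (G.MCE μ ν).Finite

/-- `Ext(μ; E) = ⋃_{ν ∈ E} {α : μα ∈ MCE(μ,ν)}`. -/
def Ext (μ : G.Path) (E : Set G.Path) : Set G.Path :=
  {α | G.s μ = G.r α ∧ ∃ ν ∈ E, G.comp μ α ∈ G.MCE μ ν}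

/-- `Ext` computed relative to a sub-`k`-graph with path set `W`. -/
def ExtIn (W : Set G.Path) (μ : G.Path) (E : Set G.Path) : Set G.Path :=
  {α | G.s μ = G.r α ∧ ∃ ν ∈ E, G.comp μ α ∈ G.MCE μ ν ∩ W}

/-- `E` is exhaustive at `v` relative to the sub-`k`-graph with path set `W`. -/
def ExhaustiveIn (W : Set G.Path) (v : G.Path) (E : Set G.Path) : Prop :=
  ∀ l ∈ W, G.r l = v → ∃ μ ∈ E, (G.MCE l μ ∩ W).Nonempty

def Exhaustive (v : G.Path) (E : Set G.Path) : Prop := G.ExhaustiveIn Set.univ v E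

/-- Membership in `FE` of the sub-`k`-graph with path set `W`. -/
def IsFEIn (W : Set G.Path) (E : Set G.Path) : Prop :=
  E.Finite ∧ E ⊆ W ∧ (∀ μ ∈ E, ¬ G.IsVertex μ) ∧
    ∃ v, G.IsVertex v ∧ (∀ μ ∈ E, G.r μ = v) ∧ G.ExhaustiveIn W v E

def IsFE (E : Set G.Path) : Prop := G.IsFEIn Set.univ E

/-- A satiated collection of finite exhaustive sets, relative to the sub-`k`-graph `W`. -/
def SatiatedIn (W : Set G.Path) (Ε : Set (Set G.Path)) : Prop :=
  (∀ E ∈ Ε, G.IsFEIn W E) ∧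
  ∀ F ∈ Ε, ∀ v, G.IsVertex v → (∀ μ ∈ F, G.r μ = v) →
    ((∀ l ∈ W, G.r l = v → l ≠ v → insert l F ∈ Ε) ∧
     (∀ l ∈ W, G.r l = v →
        (¬ ∃ μ ∈ F, ∃ μ', G.s μ = G.r μ' ∧ G.comp μ μ' = l) →
        G.ExtIn W l F ∈ Ε) ∧
     (∀ lam lam', lam ∈ F → G.s lam = G.r lam' → G.comp lam lam' ∈ F →
        lam' ≠ G.s lam → F \ {G.comp lam lam'} ∈ Ε) ∧
     (∀ lam ∈ F, ∀ Gs ∈ Ε, (∀ μ ∈ Gs, G.r μ = G.s lam) →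
        ((F \ {lam}) ∪ (G.comp lam) '' Gs) ∈ Ε))

def Satiated (Ε : Set (Set G.Path)) : Prop := G.SatiatedIn Set.univ Ε

end KGraph

/-- A normalised `𝕋`-valued categorical `2`-cocycle on a `k`-graph, with the
circle realised as the norm-one complex numbers. -/
structure KGraph.Cocycle {k : ℕ} (G : KGraph k) where
  c : G.Path → G.Path → ℂ
  norm_one : ∀ μ ν, G.s μ = G.r ν → ‖c μ ν‖ = 1
  cocycle : ∀ l μ ν, G.s l = G.r μ → G.s μ = G.r ν →
    c l μ * c (G.comp l μ) ν = c μ ν * c l (G.comp μ ν)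
  left_id : ∀ l, c (G.r l) l = 1
  right_id : ∀ l, c l (G.s l) = 1

namespace KGraph

variable {k : ℕ} (G : KGraph k)

section CStar

variable {A : Type*} [NonUnitalNormedRing A] [StarRing A] [CStarRing A]
  [NormedSpace ℂ A] [IsScalarTower ℂ A A] [SMulCommClass ℂ A A]
  [StarModule ℂ A] [CompleteSpace A]

/-- Toeplitz–Cuntz–Krieger `(Λ, c)`-family. -/
def IsTCK (σ : G.Cocycle) (t : G.Path → A) : Prop :=
  (∀ v, G.IsVertex v → star (t v) = t v ∧ t v * t v = t v) ∧
  (∀ v w, G.IsVertex v → G.IsVertex w → v ≠ w → t v * t w = 0) ∧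
  (∀ μ ν, G.s μ = G.r ν → t μ * t ν = σ.c μ ν • t (G.comp μ ν)) ∧
  (∀ l, star (t l) * t l = t (G.s l)) ∧
  (∀ μ ν (F : Finset G.Path), (F : Set G.Path) = G.MCE μ ν →
    (t μ * star (t μ)) * (t ν * star (t ν)) = ∑ l ∈ F, t l * star (t l))

open scoped Classical in
/-- `Δ(t)^F = ∏_{l ∈ F} (q_v - q_l)`; the factors commute for a TCK family, so the
`noncommProd` below is the product from the paper.  The product is computed in the
unitization (with a harmless prefactor `q_v`, which acts as the identity on each
factor for a TCK family with `F ⊆ vΛ`), so that the empty product is `q_v`. -/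
noncomputable def Delta (t : G.Path → A) (v : G.Path) (F : Finset G.Path) : A :=
  if h : (F : Set G.Path).Pairwise (Function.onFun Commute fun l =>
      ((t v * star (t v) - t l * star (t l) : A) : Unitization ℂ A))
  then (((t v * star (t v) : A) : Unitization ℂ A) *
      F.noncommProd (fun l => ((t v * star (t v) - t l * star (t l) : A) : Unitization ℂ A)) h).snd
  else 0

/-- Relative Cuntz–Krieger `(Λ, c; Ε)`-family. -/
def IsRelCK (σ : G.Cocycle) (Ε : Set (Set G.Path)) (t : G.Path → A) : Prop :=
  G.IsTCK σ t ∧ ∀ (F : Finset G.Path) (v : G.Path), (F : Set G.Path) ∈ Ε →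
    G.IsVertex v → (∀ μ ∈ F, G.r μ = v) → G.Delta t v F = 0

/-- Cuntz–Krieger `(Λ, c)`-family (finitely aligned case). -/
def IsCK (σ : G.Cocycle) (t : G.Path → A) : Prop :=
  G.IsRelCK σ {E | G.IsFE E} t

/-- The `C*`-subalgebra of `A` generated by a family `t`, as a subset of `A`. -/
def cstarOf (t : G.Path → A) : Set A :=
  closure (↑(NonUnitalStarAlgebra.adjoin ℂ (Set.range t)) : Set A)

end CStar

/-- Row-finite with no sources: every `vΛ^n` is finite and nonempty. -/
def RowFiniteNoSources : Prop :=
  ∀ v, G.IsVertex v → ∀ n : Fin k → ℕ,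
    {l | G.r l = v ∧ G.d l = n}.Finite ∧ {l | G.r l = v ∧ G.d l = n}.Nonempty

section CStar2

variable {A : Type*} [NonUnitalNormedRing A] [StarRing A] [CStarRing A]
  [NormedSpace ℂ A] [IsScalarTower ℂ A A] [SMulCommClass ℂ A A]
  [StarModule ℂ A] [CompleteSpace A]

/-- Cuntz–Krieger family, row-finite no sources formulation:
`∑_{λ ∈ vΛ^n} t_λ t_λ* = t_v`. -/
def IsCKrf (σ : G.Cocycle) (t : G.Path → A) : Prop :=
  G.IsTCK σ t ∧ ∀ v (n : Fin k → ℕ) (F : Finset G.Path), G.IsVertex v →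
    (F : Set G.Path) = {l | G.r l = v ∧ G.d l = n} →
    ∑ l ∈ F, t l * star (t l) = t v

end CStar2

/-- A filter in a `k`-graph. -/
def IsFilter (S : Set G.Path) : Prop :=
  (∀ l, (∃ α, G.s l = G.r α ∧ G.comp l α ∈ S) → l ∈ S) ∧
  (∀ μ ∈ S, ∀ ν ∈ S, (G.MCE μ ν ∩ S).Nonempty)

/-- An ultrafilter: a filter meeting every `Λ^n`. -/
def IsUltrafilter (S : Set G.Path) : Prop :=
  G.IsFilter S ∧ ∀ n : Fin k → ℕ, ∃ l ∈ S, G.d l = n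

/-- `ℓ_μ(S) = {ν : νΛ ∩ μS ≠ ∅}`. -/
def lmap (μ : G.Path) (S : Set G.Path) : Set G.Path :=
  {ν | ∃ τ ∈ S, G.s μ = G.r τ ∧ ∃ α, G.s ν = G.r α ∧ G.comp ν α = G.comp μ τ}

/-- `μ ∼ ν`: `ℓ_μ(S) = ℓ_ν(S)` for every ultrafilter `S` with `r(S) = s(μ)`. -/
def PEquiv (μ ν : G.Path) : Prop :=
  ∀ S, G.IsUltrafilter S → G.s μ ∈ S → G.lmap μ S = G.lmap ν S

/-- `d` with values in `ℤ^k`. -/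
def dZ (l : G.Path) : Fin k → ℤ := fun i => (G.d l i : ℤ)

/-- `Per(Λ) ≤ ℤ^k`, generated by `{d(μ) - d(ν) : μ ∼ ν}`. -/
def PerGroup : AddSubgroup (Fin k → ℤ) :=
  AddSubgroup.closure
    {m | ∃ μ ν, G.s μ = G.s ν ∧ G.PEquiv μ ν ∧ m = G.dZ μ - G.dZ ν}

/-- The hereditary set `H_Per`. -/
def HPer : Set G.Path :=
  {v | G.IsVertex v ∧ ∀ m n : Fin k → ℕ,
    ((fun i => (m i : ℤ)) - fun i => (n i : ℤ)) ∈ G.PerGroup →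
    ∀ l, G.r l = v → G.d l = m →
      ∃ μ, G.r μ = v ∧ G.d μ = n ∧ G.s μ = G.s l ∧ G.PEquiv l μ}

end KGraph

/-! If `μ ∼ ν`, every `μλ` with `d(λ) = d(ν)` extends `ν`: since `Λ` has no sources, some
ultrafilter `S` contains `λ`; then `ν ∈ ℓ_ν(S) = ℓ_μ(S)`, and a common extension in `S` of `λ` and
the witness puts `ν` and `μλ` below a single path, whose prefixes are determined by their degrees.
The Cuntz–Krieger relation at degree `d(ν)` gives `q_μ = ∑_λ q_{μλ}`, hence `q_ν q_μ = q_μ`; by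
symmetry and taking adjoints, `q_μ = q_ν`. -/

namespace KGraph

variable {k : ℕ} {G : KGraph k}

theorem r_s (l : G.Path) : G.r (G.s l) = G.s l := G.r_of_vertex _ (G.d_s l)

theorem s_r (l : G.Path) : G.s (G.r l) = G.r l := G.s_of_vertex _ (G.d_r l)

variable (G) in
/-- `IsPrefix x z` means `z ∈ xΛ`. -/
def IsPrefix (x z : G.Path) : Prop := ∃ b, G.s x = G.r b ∧ G.comp x b = z

theorem isPrefix_comp {x b : G.Path} (h : G.s x = G.r b) : G.IsPrefix x (G.comp x b) :=
  ⟨b, h, rfl⟩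

theorem r_isPrefix (z : G.Path) : G.IsPrefix (G.r z) z := ⟨z, s_r z, G.id_comp z⟩

namespace IsPrefix

theorem refl (x : G.Path) : G.IsPrefix x x := ⟨G.s x, (r_s x).symm, G.comp_id x⟩

theorem trans {x y z : G.Path} (hxy : G.IsPrefix x y) (hyz : G.IsPrefix y z) :
    G.IsPrefix x z := by
  obtain ⟨b, hb, rfl⟩ := hxy
  obtain ⟨c, hc, rfl⟩ := hyz
  rw [G.s_comp x b hb] at hc
  exact ⟨G.comp b c, by rw [G.r_comp b c hc, hb], (G.comp_assoc x b c hb hc).symm⟩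

theorem comp_left {x z : G.Path} (h : G.IsPrefix x z) {μ : G.Path} (hμ : G.s μ = G.r x) :
    G.IsPrefix (G.comp μ x) (G.comp μ z) := by
  obtain ⟨b, hb, rfl⟩ := h
  exact ⟨b, by rw [G.s_comp μ x hμ, hb], G.comp_assoc μ x b hμ hb⟩

theorem d_le {x z : G.Path} (h : G.IsPrefix x z) : G.d x ≤ G.d z := by
  obtain ⟨b, hb, rfl⟩ := h
  rw [G.d_comp x b hb]
  exact le_self_add

theorem eq_of_d_eq {x y z : G.Path} (hx : G.IsPrefix x z) (hy : G.IsPrefix y z)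
    (hd : G.d x = G.d y) : x = y := by
  obtain ⟨b, hb, hxz⟩ := hx
  obtain ⟨c, hc, hyz⟩ := hy
  have hdz : G.d z = G.d x + G.d b := by rw [← hxz, G.d_comp x b hb]
  have hdc : G.d c = G.d b := by
    refine add_left_cancel (a := G.d x) ?_
    rw [← hdz, hd, ← hyz, G.d_comp y c hc]
  obtain ⟨_, _, huniq⟩ := G.factor z (G.d x) (G.d b) hdz
  exact congrArg Prod.fst ((huniq (x, b) ⟨rfl, rfl, hb, hxz⟩).trans
    (huniq (y, c) ⟨hd.symm, hdc, hc, hyz⟩).symm)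

theorem exists_between {x z : G.Path} (h : G.IsPrefix x z) {m : Fin k → ℕ} (hxm : G.d x ≤ m)
    (hmz : m ≤ G.d z) : ∃ p, G.IsPrefix x p ∧ G.IsPrefix p z ∧ G.d p = m := by
  obtain ⟨a, ha, rfl⟩ := h
  have hdz := G.d_comp x a ha
  have hda : G.d a = (m - G.d x) + (G.d (G.comp x a) - m) := by
    funext j
    have := congrFun hdz j
    have := hxm j
    have := hmz j
    simp only [Pi.add_apply, Pi.sub_apply] at *
    omega
  obtain ⟨⟨a₁, a₂⟩, ⟨hd₁, -, ha₁₂, rfl⟩, -⟩ := G.factor a _ _ hda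
  have hxa₁ : G.s x = G.r a₁ := by rwa [G.r_comp a₁ a₂ ha₁₂] at ha
  refine ⟨G.comp x a₁, isPrefix_comp hxa₁, ⟨a₂, by rwa [G.s_comp x a₁ hxa₁],
    G.comp_assoc x a₁ a₂ hxa₁ ha₁₂⟩, ?_⟩
  rw [G.d_comp x a₁ hxa₁, hd₁, add_tsub_cancel_of_le hxm]

theorem of_d_le {x y z : G.Path} (hx : G.IsPrefix x z) (hy : G.IsPrefix y z)
    (hd : G.d x ≤ G.d y) : G.IsPrefix x y := by
  obtain ⟨p, hxp, hpz, hdp⟩ := hx.exists_between hd hy.d_le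
  rwa [← hpz.eq_of_d_eq hy hdp]

end IsPrefix

theorem IsFilter.mem_of_isPrefix {S : Set G.Path} (hS : G.IsFilter S) {x z : G.Path}
    (h : G.IsPrefix x z) (hz : z ∈ S) : x ∈ S := by
  obtain ⟨b, hb, rfl⟩ := h
  exact hS.1 x ⟨b, hb, hz⟩

theorem isUltrafilter_of_chain (f : ℕ → G.Path) (hf : ∀ i, G.IsPrefix (f i) (f (i + 1)))
    (hunb : ∀ n, ∃ i, n ≤ G.d (f i)) : G.IsUltrafilter {x | ∃ i, G.IsPrefix x (f i)} := by
  have mono : ∀ i j, i ≤ j → G.IsPrefix (f i) (f j) := fun i =>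
    Nat.le_induction (IsPrefix.refl _) fun j _ ih => ih.trans (hf j)
  refine ⟨⟨?_, ?_⟩, ?_⟩
  · rintro x ⟨α, hxα, i, hi⟩
    exact ⟨i, (isPrefix_comp hxα).trans hi⟩
  · rintro x ⟨i, hx⟩ y ⟨j, hy⟩
    replace hx := hx.trans (mono i _ (le_max_left i j))
    replace hy := hy.trans (mono j _ (le_max_right i j))
    obtain ⟨p, hxp, hpz, hdp⟩ := hx.exists_between le_sup_left (sup_le hx.d_le hy.d_le)
    exact ⟨p, ⟨hdp, hxp, hy.of_d_le hpz (hdp ▸ le_sup_right)⟩, _, hpz⟩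
  · intro n
    obtain ⟨i, hi⟩ := hunb n
    obtain ⟨p, -, hp, hdp⟩ :=
      (r_isPrefix (f i)).exists_between (by rw [G.d_r]; exact zero_le) hi
    exact ⟨p, ⟨i, hp⟩, hdp⟩

/-- Extending `l` forever by edges of degree `(1, …, 1)` yields an ultrafilter containing `l`. -/
theorem exists_isUltrafilter_mem (hrf : G.RowFiniteNoSources) (l : G.Path) :
    ∃ S, G.IsUltrafilter S ∧ l ∈ S := by
  choose e he using fun x : G.Path => (hrf (G.s x) (G.d_s x) 1).2
  set f : ℕ → G.Path := fun i => (fun x => G.comp x (e x))^[i] l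
  have hf : ∀ i, f (i + 1) = G.comp (f i) (e (f i)) := fun i =>
    Function.iterate_succ_apply' _ i l
  have hdf : ∀ i j, i ≤ G.d (f i) j := by
    intro i
    induction i with
    | zero => exact fun _ => Nat.zero_le _
    | succ i ih =>
      intro j
      rw [hf, G.d_comp _ _ (he _).1.symm, (he _).2]
      exact Nat.succ_le_succ (ih j)
  refine ⟨_, isUltrafilter_of_chain f (fun i => hf i ▸ isPrefix_comp (he _).1.symm)
    (fun n => ⟨Finset.univ.sup n, fun j => (Finset.le_sup (Finset.mem_univ j)).trans
      (hdf _ j)⟩), 0, IsPrefix.refl l⟩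

theorem PEquiv.symm {μ ν : G.Path} (hs : G.s μ = G.s ν) (h : G.PEquiv μ ν) : G.PEquiv ν μ :=
  fun S hS hν => (h S hS (by rwa [hs])).symm

theorem PEquiv.isPrefix_comp (hrf : G.RowFiniteNoSources) {μ ν : G.Path}
    (hs : G.s μ = G.s ν) (h : G.PEquiv μ ν) {l : G.Path} (hl : G.r l = G.s μ)
    (hd : G.d l = G.d ν) : G.IsPrefix ν (G.comp μ l) := by
  obtain ⟨S, hS, hlS⟩ := exists_isUltrafilter_mem hrf l
  have hμS : G.s μ ∈ S := hl ▸ hS.1.mem_of_isPrefix (r_isPrefix l) hlS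
  have hν : ν ∈ G.lmap μ S := by
    rw [h S hS hμS]
    exact ⟨G.s ν, hs ▸ hμS, (r_s ν).symm, G.s ν, (r_s ν).symm, rfl⟩
  obtain ⟨τ, hτS, hμτ, hντ⟩ := hν
  obtain ⟨e, ⟨-, hle, hτe⟩, -⟩ := hS.1.2 l hlS τ hτS
  refine (IsPrefix.trans hντ (IsPrefix.comp_left hτe hμτ)).of_d_le
    (IsPrefix.comp_left hle hl.symm) ?_
  rw [G.d_comp μ l hl.symm, hd]
  exact le_add_self

theorem Cocycle.mul_star_self (σ : G.Cocycle) {μ ν : G.Path} (h : G.s μ = G.r ν) :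
    σ.c μ ν * star (σ.c μ ν) = 1 := by
  rw [Complex.star_def, Complex.mul_conj', σ.norm_one μ ν h]
  norm_num

section Families

variable {A : Type*} [NonUnitalNormedRing A] [StarRing A] [NormedSpace ℂ A]
  {σ : G.Cocycle} {t : G.Path → A}

theorem IsTCK.mul_s (ht : G.IsTCK σ t) (μ : G.Path) : t μ * t (G.s μ) = t μ := by
  rw [ht.2.2.1 μ _ (r_s μ).symm, σ.right_id, G.comp_id, one_smul]

variable [IsScalarTower ℂ A A] [SMulCommClass ℂ A A] [StarModule ℂ A]

theorem IsTCK.q_comp (ht : G.IsTCK σ t) {μ l : G.Path} (h : G.s μ = G.r l) :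
    t (G.comp μ l) * star (t (G.comp μ l)) = t μ * (t l * star (t l)) * star (t μ) := by
  calc t (G.comp μ l) * star (t (G.comp μ l))
      = (σ.c μ l * star (σ.c μ l)) • (t (G.comp μ l) * star (t (G.comp μ l))) := by
        rw [σ.mul_star_self h, one_smul]
    _ = (t μ * t l) * star (t μ * t l) := by
        rw [ht.2.2.1 μ l h, star_smul, smul_mul_smul_comm]
    _ = t μ * (t l * star (t l)) * star (t μ) := by
        simp only [star_mul, mul_assoc]

theorem IsTCK.q_mul_q_of_isPrefix (ht : G.IsTCK σ t) {ν z : G.Path} (h : G.IsPrefix ν z) :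
    t ν * star (t ν) * (t z * star (t z)) = t z * star (t z) := by
  obtain ⟨β, hβ, rfl⟩ := h
  have hqν : t ν * star (t ν) * t ν = t ν := by rw [mul_assoc, ht.2.2.2.1, ht.mul_s]
  rw [ht.q_comp hβ, ← mul_assoc, ← mul_assoc, hqν]

theorem IsCKrf.q_eq_sum (ht : G.IsCKrf σ t) (μ : G.Path) (n : Fin k → ℕ) (F : Finset G.Path)
    (hF : (F : Set G.Path) = {l | G.r l = G.s μ ∧ G.d l = n}) :
    t μ * star (t μ) = ∑ l ∈ F, t (G.comp μ l) * star (t (G.comp μ l)) := by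
  have hl : ∀ l ∈ F, G.s μ = G.r l := fun l hl => ((Set.ext_iff.1 hF l).1 hl).1.symm
  calc t μ * star (t μ)
      = t μ * (∑ l ∈ F, t l * star (t l)) * star (t μ) := by
        rw [ht.2 _ n F (G.d_s μ) hF, ht.1.mul_s]
    _ = ∑ l ∈ F, t (G.comp μ l) * star (t (G.comp μ l)) := by
        rw [Finset.mul_sum, Finset.sum_mul]
        exact Finset.sum_congr rfl fun l hlF => (ht.1.q_comp (hl l hlF)).symm

theorem IsCKrf.q_mul_q_of_pEquiv (ht : G.IsCKrf σ t) (hrf : G.RowFiniteNoSources)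
    {μ ν : G.Path} (hs : G.s μ = G.s ν) (h : G.PEquiv μ ν) :
    t ν * star (t ν) * (t μ * star (t μ)) = t μ * star (t μ) := by
  have hfin := (hrf (G.s μ) (G.d_s μ) (G.d ν)).1
  rw [ht.q_eq_sum μ (G.d ν) hfin.toFinset hfin.coe_toFinset, Finset.mul_sum]
  refine Finset.sum_congr rfl fun l hl => ht.1.q_mul_q_of_isPrefix ?_
  obtain ⟨hr, hd⟩ := hfin.mem_toFinset.1 hl
  exact h.isPrefix_comp hrf hs hr hd

end Families

end KGraph

theorem stmt15_general {k : ℕ} (G : KGraph k) (hrf : G.RowFiniteNoSources) (σ : G.Cocycle)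
    {A : Type*} [NonUnitalNormedRing A] [StarRing A]
    [NormedSpace ℂ A] [IsScalarTower ℂ A A] [SMulCommClass ℂ A A]
    [StarModule ℂ A]
    (t : G.Path → A) (ht : G.IsCKrf σ t)
    (μ ν : G.Path) (hs : G.s μ = G.s ν) (hsim : G.PEquiv μ ν) :
    t μ * star (t μ) = t ν * star (t ν) := by
  have hνμ := ht.q_mul_q_of_pEquiv hrf hs hsim
  have hμν := ht.q_mul_q_of_pEquiv hrf hs.symm (hsim.symm hs)
  calc t μ * star (t μ) = t ν * star (t ν) * (t μ * star (t μ)) := hνμ.symm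
    _ = star (t μ * star (t μ) * (t ν * star (t ν))) := by
      simp only [star_mul, star_star, mul_assoc]
    _ = t ν * star (t ν) := by rw [hμν, star_mul, star_star]

/-- for a Cuntz–Krieger family on a row-finite `k`-graph with no
sources, `μ ∼ ν` implies `t_μ t_μ* = t_ν t_ν*`. -/
theorem stmt15 {k : ℕ} (G : KGraph k) (hrf : G.RowFiniteNoSources) (σ : G.Cocycle)
    {A : Type*} [NonUnitalNormedRing A] [StarRing A] [CStarRing A]
    [NormedSpace ℂ A] [IsScalarTower ℂ A A] [SMulCommClass ℂ A A]
    [StarModule ℂ A] [CompleteSpace A]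
    (t : G.Path → A) (ht : G.IsCKrf σ t)
    (μ ν : G.Path) (hs : G.s μ = G.s ν) (hsim : G.PEquiv μ ν) :
    t μ * star (t μ) = t ν * star (t ν) :=
  stmt15_general G hrf σ t ht μ ν hs hsim
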